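/- arXiv:1403.0872 — 4 statements merged into one kernel-verified Lean document; each statement's English description precedes it below -/
import Mathlib

section
/- For every Hurst parameter H ∈ (0,1], the fractional Brownian motion covariance kernel R is positive semidefinite: for every n ∈ ℕ, all times t_1,…,t_n ∈ [0,∞) and all real numbers a_1,…,a_n, one has Σ_{i=1}^n Σ_{j=1}^n a_i a_j R(t_i,t_j) ≥ 0. -/
/-! For `0 < α < 2` one has `|x| ^ α = c_α⁻¹ ∫₀^∞ (1 - cos (x u)) / u ^ (1 + α) du`
with `c_α > 0`, and each kernel `(x, y) ↦ 1 - cos ((x - y) u)` is conditionally negative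
definite, because `∑ bᵢ bⱼ cos ((xᵢ - xⱼ) u) = |∑ bᵢ e^{i xᵢ u}|² ≥ 0`; for `α = 2` this is
a direct computation. Hence `|x - y| ^ (2H)` is conditionally negative definite for
`0 < H ≤ 1`, and Schoenberg's recentring of it at the point `0` is `2 R`, which is therefore
positive semidefinite. -/

open scoped BigOperators

/-- Fractional Brownian motion covariance kernel with Hurst parameter `H`:
`R(s,t) = (s^{2H} + t^{2H} - |t-s|^{2H}) / 2`, with real powers. -/
noncomputable def fbmCov (H s t : ℝ) : ℝ :=
  (s ^ (2 * H) + t ^ (2 * H) - |t - s| ^ (2 * H)) / 2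

open MeasureTheory Real Set

def IsCondNegDefKernel {X : Type*} (K : X → X → ℝ) : Prop :=
  ∀ (n : ℕ) (x : Fin n → X) (b : Fin n → ℝ), ∑ i, b i = 0 →
    ∑ i, ∑ j, b i * b j * K (x i) (x j) ≤ 0

namespace IsCondNegDefKernel

variable {X : Type*} {K : X → X → ℝ}

theorem const_mul (hK : IsCondNegDefKernel K) {c : ℝ} (hc : 0 ≤ c) :
    IsCondNegDefKernel fun x y => c * K x y := by
  intro n x b hb
  have h : ∑ i, ∑ j, b i * b j * (c * K (x i) (x j))
      = c * ∑ i, ∑ j, b i * b j * K (x i) (x j) := by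
    simp only [Finset.mul_sum]
    exact Finset.sum_congr rfl fun i _ => Finset.sum_congr rfl fun j _ => by ring
  rw [h]
  exact mul_nonpos_of_nonneg_of_nonpos hc (hK n x b hb)

theorem integral {Ω : Type*} [MeasurableSpace Ω] {μ : Measure Ω} {F : Ω → X → X → ℝ}
    (hF : ∀ᵐ ω ∂μ, IsCondNegDefKernel (F ω))
    (hF_int : ∀ x y, Integrable (fun ω => F ω x y) μ) :
    IsCondNegDefKernel fun x y => ∫ ω, F ω x y ∂μ := by
  intro n x b hb
  have h : ∑ i, ∑ j, b i * b j * ∫ ω, F ω (x i) (x j) ∂μ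
      = ∫ ω, ∑ i, ∑ j, b i * b j * F ω (x i) (x j) ∂μ := by
    rw [integral_finsetSum _ fun i _ => integrable_finsetSum _ fun j _ =>
      (hF_int (x i) (x j)).const_mul _]
    simp only [integral_finsetSum _ fun j _ => (hF_int _ (x j)).const_mul _,
      integral_const_mul]
  rw [h]
  exact integral_nonpos_of_ae (hF.mono fun ω hω => hω n x b hb)

theorem sum_mul_mul_recenter_nonneg (hK : IsCondNegDefKernel K) (x₀ : X) (n : ℕ)
    (x : Fin n → X) (a : Fin n → ℝ) :
    0 ≤ ∑ i, ∑ j, a i * a j * (K (x i) x₀ + K x₀ (x j) - K (x i) (x j) - K x₀ x₀) := by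
  -- Schoenberg: test `K` on the points `x₀, x₁, …, xₙ` with weights `-∑ aᵢ, a₁, …, aₙ`
  have hb : ∑ i, (Fin.cons (-∑ i, a i) a : Fin (n + 1) → ℝ) i = 0 := by
    simp [Fin.sum_cons]
  have h := hK (n + 1) (Fin.cons x₀ x) (Fin.cons (-∑ i, a i) a) hb
  simp only [Fin.sum_univ_succ, Fin.cons_zero, Fin.cons_succ] at h
  simp only [mul_sub, mul_add, mul_assoc, neg_mul, mul_neg, Finset.sum_add_distrib,
    Finset.sum_sub_distrib, Finset.sum_neg_distrib, ← Finset.mul_sum, ← Finset.sum_mul,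
    mul_left_comm (a _) (∑ i, a i)] at h ⊢
  linarith

end IsCondNegDefKernel

theorem integrableOn_one_sub_cos_div_rpow {α : ℝ} (hα0 : 0 < α) (hα2 : α < 2) (x : ℝ) :
    IntegrableOn (fun u => (1 - cos (x * u)) / u ^ (1 + α)) (Ioi 0) := by
  have hmeas : ∀ s : Set ℝ, AEStronglyMeasurable (fun u => (1 - cos (x * u)) / u ^ (1 + α))
      (volume.restrict s) := fun s =>
    (by fun_prop : Measurable fun u : ℝ => (1 - cos (x * u)) / u ^ (1 + α)).aestronglyMeasurable
  have hnonneg : ∀ u : ℝ, 0 < u → 0 ≤ (1 - cos (x * u)) / u ^ (1 + α) := fun u hu =>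
    div_nonneg (by linarith [cos_le_one (x * u)]) (rpow_nonneg hu.le _)
  rw [← Ioc_union_Ioi_eq_Ioi zero_le_one]
  refine IntegrableOn.union ?near_zero ?near_infinity
  case near_zero =>
    have hdom : IntegrableOn (fun u : ℝ => x ^ 2 / 2 * u ^ (1 - α)) (Ioc 0 1) := by
      have h := intervalIntegral.intervalIntegrable_rpow' (r := 1 - α) (by linarith)
        (a := 0) (b := 1)
      exact ((intervalIntegrable_iff_integrableOn_Ioc_of_le zero_le_one).1 h).const_mul _
    refine hdom.mono' (hmeas _) ?_
    filter_upwards [ae_restrict_mem measurableSet_Ioc] with u hu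
    have hu0 : 0 < u := hu.1
    rw [norm_of_nonneg (hnonneg u hu0), div_le_iff₀ (rpow_pos_of_pos hu0 _), mul_assoc,
      ← rpow_add hu0, show 1 - α + (1 + α) = 2 by ring, rpow_two]
    linarith [one_sub_sq_div_two_le_cos (x := x * u)]
  case near_infinity =>
    have hdom : IntegrableOn (fun u : ℝ => 2 * u ^ (-(1 + α))) (Ioi 1) :=
      (integrableOn_Ioi_rpow_of_lt (by linarith) one_pos).const_mul _
    refine hdom.mono' (hmeas _) ?_
    filter_upwards [ae_restrict_mem measurableSet_Ioi] with u hu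
    have hu0 : (0 : ℝ) < u := one_pos.trans hu
    rw [norm_of_nonneg (hnonneg u hu0), rpow_neg hu0.le, div_eq_mul_inv]
    gcongr
    linarith [neg_one_le_cos (x * u)]

theorem integral_one_sub_cos_div_rpow {α : ℝ} (hα0 : 0 < α) (x : ℝ) :
    ∫ u in Ioi 0, (1 - cos (x * u)) / u ^ (1 + α)
      = |x| ^ α * ∫ u in Ioi 0, (1 - cos u) / u ^ (1 + α) := by
  rcases eq_or_ne x 0 with rfl | hx
  · simp [zero_rpow hα0.ne']
  have hx' : 0 < |x| := abs_pos.2 hx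
  calc ∫ u in Ioi 0, (1 - cos (x * u)) / u ^ (1 + α)
      = ∫ u in Ioi 0, |x| ^ (1 + α) * ((1 - cos (|x| * u)) / (|x| * u) ^ (1 + α)) := by
        refine setIntegral_congr_fun measurableSet_Ioi fun u hu => ?_
        rw [mul_rpow hx'.le (le_of_lt hu), ← cos_abs (|x| * u), abs_mul, abs_abs, ← abs_mul,
          cos_abs]
        field_simp
    _ = |x| ^ (1 + α) * (|x|⁻¹ * ∫ u in Ioi 0, (1 - cos u) / u ^ (1 + α)) := by
        rw [integral_const_mul,
          integral_comp_mul_left_Ioi (fun u => (1 - cos u) / u ^ (1 + α)) 0 hx', mul_zero,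
          smul_eq_mul]
    _ = |x| ^ α * ∫ u in Ioi 0, (1 - cos u) / u ^ (1 + α) := by
        rw [rpow_add hx', rpow_one]
        field_simp

theorem integral_one_sub_cos_div_rpow_pos {α : ℝ} (hα0 : 0 < α) (hα2 : α < 2) :
    0 < ∫ u in Ioi 0, (1 - cos u) / u ^ (1 + α) := by
  have hint := integrableOn_one_sub_cos_div_rpow hα0 hα2 1
  simp only [one_mul] at hint
  have hpos : 0 < ∫ u in (1 : ℝ)..2, (1 - cos u) / u ^ (1 + α) := by
    refine intervalIntegral.intervalIntegral_pos_of_pos_on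
      (hint.mono_set fun u hu => ?_).intervalIntegrable (fun u hu => ?_) one_lt_two
    · rw [uIcc_of_le one_le_two] at hu
      exact one_pos.trans_le hu.1
    · have hu0 : 0 < u := one_pos.trans hu.1
      have hcos : cos u < cos 0 :=
        cos_lt_cos_of_nonneg_of_le_pi le_rfl (by linarith [pi_gt_three, hu.2]) hu0
      rw [cos_zero] at hcos
      exact div_pos (by linarith) (rpow_pos_of_pos hu0 _)
  refine hpos.trans_le ?_
  rw [intervalIntegral.integral_of_le one_le_two]
  refine setIntegral_mono_set hint ?_ (Filter.Eventually.of_forall fun u hu => one_pos.trans hu.1)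
  filter_upwards [ae_restrict_mem measurableSet_Ioi] with u hu
  exact div_nonneg (by linarith [cos_le_one u]) (rpow_nonneg (le_of_lt hu) _)

theorem isCondNegDefKernel_sub_sq : IsCondNegDefKernel fun x y : ℝ => (x - y) ^ 2 := by
  intro n x b hb
  have h : ∑ i, ∑ j, b i * b j * (x i - x j) ^ 2
      = 2 * (∑ i, b i) * ∑ i, b i * x i ^ 2 - 2 * (∑ i, b i * x i) ^ 2 := by
    have hterm : ∀ i j, b i * b j * (x i - x j) ^ 2
        = b i * x i ^ 2 * b j + b i * (b j * x j ^ 2) - 2 * (b i * x i) * (b j * x j) :=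
      fun i j => by ring
    simp only [hterm, Finset.sum_add_distrib, Finset.sum_sub_distrib, ← Finset.mul_sum,
      ← Finset.sum_mul]
    ring
  rw [h, hb]
  nlinarith [sq_nonneg (∑ i, b i * x i)]

theorem isCondNegDefKernel_one_sub_cos_mul (u : ℝ) :
    IsCondNegDefKernel fun x y : ℝ => 1 - cos ((x - y) * u) := by
  intro n x b hb
  have h : ∑ i, ∑ j, b i * b j * (1 - cos ((x i - x j) * u))
      = (∑ i, b i) ^ 2 - (∑ i, b i * cos (x i * u)) ^ 2 - (∑ i, b i * sin (x i * u)) ^ 2 := by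
    have hterm : ∀ i j, b i * b j * (1 - cos ((x i - x j) * u))
        = b i * b j - b i * cos (x i * u) * (b j * cos (x j * u))
          - b i * sin (x i * u) * (b j * sin (x j * u)) := fun i j => by
      rw [sub_mul, cos_sub]; ring
    simp only [hterm, Finset.sum_sub_distrib, ← Finset.mul_sum, ← Finset.sum_mul]
    ring
  rw [h, hb]
  nlinarith [sq_nonneg (∑ i, b i * cos (x i * u)), sq_nonneg (∑ i, b i * sin (x i * u))]

theorem isCondNegDefKernel_abs_sub_rpow {α : ℝ} (hα0 : 0 < α) (hα2 : α ≤ 2) :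
    IsCondNegDefKernel fun x y : ℝ => |x - y| ^ α := by
  rcases hα2.lt_or_eq with hlt | rfl
  · have hc := integral_one_sub_cos_div_rpow_pos hα0 hlt
    have hF : ∀ᵐ u ∂volume.restrict (Ioi 0),
        IsCondNegDefKernel fun x y : ℝ => (1 - cos ((x - y) * u)) / u ^ (1 + α) := by
      filter_upwards [ae_restrict_mem measurableSet_Ioi] with u hu
      simpa only [div_eq_inv_mul] using (isCondNegDefKernel_one_sub_cos_mul u).const_mul
        (inv_nonneg.2 (rpow_nonneg (le_of_lt hu) (1 + α)))
    have h := (IsCondNegDefKernel.integral hF fun x y =>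
      integrableOn_one_sub_cos_div_rpow hα0 hlt (x - y)).const_mul (inv_nonneg.2 hc.le)
    convert h using 3 with x y
    rw [integral_one_sub_cos_div_rpow hα0]
    field_simp
  · simpa only [rpow_two, sq_abs] using isCondNegDefKernel_sub_sq

/-- For every Hurst parameter `H ∈ (0,1]`, the fBm covariance kernel is positive
semidefinite: for all times `t₁,…,tₙ ≥ 0` and reals `a₁,…,aₙ`,
`∑ᵢ∑ⱼ aᵢ aⱼ R(tᵢ,tⱼ) ≥ 0`. -/
theorem fbmCov_posSemidef (H : ℝ) (hH0 : 0 < H) (hH1 : H ≤ 1)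
    (n : ℕ) (t : Fin n → ℝ) (ht : ∀ i, 0 ≤ t i) (a : Fin n → ℝ) :
    0 ≤ ∑ i : Fin n, ∑ j : Fin n, a i * a j * fbmCov H (t i) (t j) := by
  have hK := isCondNegDefKernel_abs_sub_rpow (α := 2 * H) (by positivity) (by linarith)
  have h := hK.sum_mul_mul_recenter_nonneg 0 n t a
  have hR : ∀ i j, |t i - 0| ^ (2 * H) + |0 - t j| ^ (2 * H) - |t i - t j| ^ (2 * H)
      - |(0 : ℝ) - 0| ^ (2 * H) = 2 * fbmCov H (t i) (t j) := fun i j => by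
    rw [fbmCov, sub_zero, zero_sub, abs_neg, abs_of_nonneg (ht i), abs_of_nonneg (ht j),
      abs_sub_comm, sub_self, abs_zero, zero_rpow (by positivity)]
    ring
  simp only [hR, mul_left_comm _ (2 : ℝ), ← Finset.mul_sum] at h
  linarith
end

section
/- Let H ∈ (0,1/2]. There exists a finite constant C depending only on H such that for all 0 ≤ a < b ≤ 1 and all partitions a = s_0 < s_1 < ⋯ < s_m = b and a = t_0 < t_1 < ⋯ < t_n = b of [a,b], one has Σ_{i=0}^{m−1} Σ_{j=0}^{n−1} |R(s_{i+1},t_{j+1}) − R(s_{i+1},t_j) − R(s_i,t_{j+1}) + R(s_i,t_j)|^{1/(2H)} ≤ C (b−a). In particular the 2D (1/(2H))-variation of R over the square [a,b]×[a,b] is controlled linearly in the side length b−a. -/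
/-!
Fix a row `[s₁, s₂]` of the grid. Its rectangular increment over `[u, v]` is `g v - g u` with
`g x = (|x - s₁|^{2H} - |x - s₂|^{2H}) / 2`. Since `x ↦ x^{2H}` is concave, `g` decreases on
`(-∞, s₁]`, increases on `[s₁, s₂]` and decreases on `[s₂, ∞)`, so its variation along any
partition of `[a, b]` is at most `2 (s₂ - s₁)^{2H}`. As `1/(2H) ≥ 1`, the sum of the
`1/(2H)`-th powers along the row is at most `2^{1/(2H)} (s₂ - s₁)`, and summing over the rows
gives `C = 2^{1/(2H)}`.
-/

open scoped BigOperators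

open Set

theorem Fin.sum_succ_sub_castSucc {M : Type*} [AddCommGroup M] {n : ℕ} (F : Fin (n + 1) → M) :
    ∑ j : Fin n, (F j.succ - F j.castSucc) = F (Fin.last n) - F 0 := by
  rw [Finset.sum_sub_distrib, sub_eq_sub_iff_add_eq_add, add_comm, ← Fin.sum_univ_succ,
    Fin.sum_univ_castSucc, add_comm]

theorem Monotone.sum_abs_sub_comp {f : ℝ → ℝ} (hf : Monotone f) {n : ℕ} {t : Fin (n + 1) → ℝ}
    (ht : Monotone t) :
    ∑ j : Fin n, |f (t j.succ) - f (t j.castSucc)| = f (t (Fin.last n)) - f (t 0) := by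
  refine (Finset.sum_congr rfl fun j _ => ?_).trans (Fin.sum_succ_sub_castSucc (f ∘ t))
  exact abs_of_nonneg (sub_nonneg.2 (hf (ht j.castSucc_le_succ)))

theorem Antitone.sum_abs_sub_comp {f : ℝ → ℝ} (hf : Antitone f) {n : ℕ} {t : Fin (n + 1) → ℝ}
    (ht : Monotone t) :
    ∑ j : Fin n, |f (t j.succ) - f (t j.castSucc)| = f (t 0) - f (t (Fin.last n)) := by
  simpa [abs_sub_comm, neg_add_eq_sub] using hf.neg.sum_abs_sub_comp ht

theorem Finset.sum_rpow_le_rpow_sum {ι : Type*} (s : Finset ι) {f : ι → ℝ} {q : ℝ}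
    (hq : 1 ≤ q) (hf : ∀ i ∈ s, 0 ≤ f i) :
    ∑ i ∈ s, f i ^ q ≤ (∑ i ∈ s, f i) ^ q := by
  induction s using Finset.cons_induction with
  | empty => simp [Real.zero_rpow (by linarith : q ≠ 0)]
  | cons a s _ ih =>
    rw [Finset.sum_cons, Finset.sum_cons]
    have hfs : ∀ i ∈ s, 0 ≤ f i := fun i hi => hf i (Finset.mem_cons_of_mem hi)
    calc f a ^ q + ∑ i ∈ s, f i ^ q ≤ f a ^ q + (∑ i ∈ s, f i) ^ q := by gcongr; exact ih hfs
      _ ≤ (f a + ∑ i ∈ s, f i) ^ q :=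
        Real.add_rpow_le_rpow_add (hf a (Finset.mem_cons_self a s)) (Finset.sum_nonneg hfs) hq

theorem apply_add_apply_add_apply_eq_clamp {M : Type*} [AddCommMonoid M] (f : ℝ → M) {c d : ℝ}
    (hcd : c ≤ d) (x : ℝ) :
    f x + f c + f d = f (min x c) + f (max c (min x d)) + f (max x d) := by
  rcases le_total x c with hxc | hcx
  · simp [hxc, hxc.trans hcd, add_comm]
  rcases le_total x d with hxd | hdx
  · simp [hcx, hxd, add_comm, add_left_comm]
  · simp [hcx, hdx, hcd, add_comm, add_left_comm]

theorem sum_abs_sub_le_of_antitoneOn_monotoneOn_antitoneOn {f : ℝ → ℝ} {a b c d : ℝ}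
    (hac : a ≤ c) (hcd : c ≤ d) (hdb : d ≤ b) (hf₁ : AntitoneOn f (Iic c))
    (hf₂ : MonotoneOn f (Icc c d)) (hf₃ : AntitoneOn f (Ici d)) {n : ℕ}
    {t : Fin (n + 1) → ℝ} (ht : Monotone t) (ht₀ : t 0 = a) (htn : t (Fin.last n) = b) :
    ∑ j : Fin n, |f (t j.succ) - f (t j.castSucc)| ≤ (f a - f c) + (f d - f c) + (f d - f b) := by
  set f₁ := fun x => f (min x c)
  set f₂ := fun x => f (max c (min x d))
  set f₃ := fun x => f (max x d)
  have hf₁' : Antitone f₁ := fun x y hxy =>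
    hf₁ (min_le_right x c) (min_le_right y c) (min_le_min_right c hxy)
  have hf₂' : Monotone f₂ := fun x y hxy =>
    hf₂ ⟨le_max_left _ _, max_le hcd (min_le_right _ _)⟩
      ⟨le_max_left _ _, max_le hcd (min_le_right _ _)⟩
      (max_le_max_left c (min_le_min_right d hxy))
  have hf₃' : Antitone f₃ := fun x y hxy =>
    hf₃ (le_max_right x d) (le_max_right y d) (max_le_max_right d hxy)
  have hsplit (x y : ℝ) : f y - f x = (f₁ y - f₁ x) + (f₂ y - f₂ x) + (f₃ y - f₃ x) := by
    have hx := apply_add_apply_add_apply_eq_clamp f hcd x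
    have hy := apply_add_apply_add_apply_eq_clamp f hcd y
    linear_combination hy - hx
  calc ∑ j : Fin n, |f (t j.succ) - f (t j.castSucc)|
      ≤ ∑ j : Fin n, (|f₁ (t j.succ) - f₁ (t j.castSucc)| + |f₂ (t j.succ) - f₂ (t j.castSucc)|
          + |f₃ (t j.succ) - f₃ (t j.castSucc)|) :=
        Finset.sum_le_sum fun j _ => hsplit _ _ ▸ abs_add_three _ _ _
    _ = (f₁ a - f₁ b) + (f₂ b - f₂ a) + (f₃ a - f₃ b) := by
        rw [Finset.sum_add_distrib, Finset.sum_add_distrib, hf₁'.sum_abs_sub_comp ht,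
          hf₂'.sum_abs_sub_comp ht, hf₃'.sum_abs_sub_comp ht, ht₀, htn]
    _ = (f a - f c) + (f d - f c) + (f d - f b) := by
        simp only [f₁, f₂, f₃, min_eq_left hac, min_eq_right (hcd.trans hdb), min_eq_right hdb,
          min_eq_left (hac.trans hcd), max_eq_left hac, max_eq_right hcd, max_eq_left hdb,
          max_eq_right (hac.trans hcd)]

theorem ConcaveOn.sub_le_sub_of_le {s : Set ℝ} {f : ℝ → ℝ} (hf : ConcaveOn ℝ s f) {x y d : ℝ}
    (hx : x ∈ s) (hyd : y + d ∈ s) (hxy : x ≤ y) (hd : 0 ≤ d) :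
    f (y + d) - f y ≤ f (x + d) - f x := by
  rcases hd.eq_or_lt with rfl | hd
  · simp
  have hIcc : Icc x (y + d) ⊆ s := hf.1.ordConnected.out hx hyd
  have hxd : x + d ∈ s := hIcc ⟨by linarith, by linarith⟩
  have hy : y ∈ s := hIcc ⟨hxy, by linarith⟩
  have h₁ : slope f x (y + d) ≤ slope f x (x + d) :=
    hf.slope_anti hx ⟨hxd, by simp [hd.ne']⟩ ⟨hyd, by simp; linarith⟩ (by linarith)
  have h₂ : slope f (y + d) y ≤ slope f (y + d) x :=
    hf.slope_anti hyd ⟨hx, by simp; linarith⟩ ⟨hy, by simp [hd.ne']⟩ hxy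
  rw [slope_comm f x (y + d)] at h₁
  have hslope : slope f y (y + d) ≤ slope f x (x + d) := by
    rw [slope_comm]; exact h₂.trans h₁
  simp only [slope_def_field, add_sub_cancel_left] at hslope
  exact (div_le_div_iff_of_pos_right hd).1 hslope

noncomputable def fbmProfile (p s₁ s₂ x : ℝ) : ℝ :=
  (|x - s₁| ^ p - |x - s₂| ^ p) / 2

theorem fbmCov_rect_eq_fbmProfile_sub (H s₁ s₂ u v : ℝ) :
    fbmCov H s₂ v - fbmCov H s₂ u - fbmCov H s₁ v + fbmCov H s₁ u
      = fbmProfile (2 * H) s₁ s₂ v - fbmProfile (2 * H) s₁ s₂ u := by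
  simp only [fbmCov, fbmProfile]
  ring

section fbmProfile

variable {p s₁ s₂ : ℝ}

theorem fbmProfile_antitoneOn_Iic (hp₀ : 0 ≤ p) (hp₁ : p ≤ 1) (hs : s₁ ≤ s₂) :
    AntitoneOn (fbmProfile p s₁ s₂) (Iic s₁) := by
  intro x (hx : x ≤ s₁) y (hy : y ≤ s₁) hxy
  have h := (Real.concaveOn_rpow hp₀ hp₁).sub_le_sub_of_le (x := s₁ - y) (y := s₁ - x)
    (d := s₂ - s₁) (mem_Ici.2 (sub_nonneg.2 hy)) (mem_Ici.2 (by linarith)) (by linarith)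
    (sub_nonneg.2 hs)
  simp only [fbmProfile, abs_of_nonpos (sub_nonpos.2 hx), abs_of_nonpos (sub_nonpos.2 hy),
    abs_of_nonpos (sub_nonpos.2 (hx.trans hs)), abs_of_nonpos (sub_nonpos.2 (hy.trans hs)),
    neg_sub]
  rw [show s₁ - y + (s₂ - s₁) = s₂ - y by ring, show s₁ - x + (s₂ - s₁) = s₂ - x by ring] at h
  linarith

theorem fbmProfile_monotoneOn_Icc (hp₀ : 0 ≤ p) :
    MonotoneOn (fbmProfile p s₁ s₂) (Icc s₁ s₂) := by
  rintro x ⟨hx₁, hx₂⟩ y ⟨hy₁, hy₂⟩ hxy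
  simp only [fbmProfile, abs_of_nonneg (sub_nonneg.2 hx₁), abs_of_nonneg (sub_nonneg.2 hy₁),
    abs_of_nonpos (sub_nonpos.2 hx₂), abs_of_nonpos (sub_nonpos.2 hy₂), neg_sub]
  have h₁ : (x - s₁) ^ p ≤ (y - s₁) ^ p := by gcongr
  have h₂ : (s₂ - y) ^ p ≤ (s₂ - x) ^ p := by gcongr
  linarith

theorem fbmProfile_antitoneOn_Ici (hp₀ : 0 ≤ p) (hp₁ : p ≤ 1) (hs : s₁ ≤ s₂) :
    AntitoneOn (fbmProfile p s₁ s₂) (Ici s₂) := by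
  intro x (hx : s₂ ≤ x) y (hy : s₂ ≤ y) hxy
  have h := (Real.concaveOn_rpow hp₀ hp₁).sub_le_sub_of_le (x := x - s₂) (y := y - s₂)
    (d := s₂ - s₁) (mem_Ici.2 (sub_nonneg.2 hx)) (mem_Ici.2 (by linarith)) (by linarith)
    (sub_nonneg.2 hs)
  simp only [fbmProfile, abs_of_nonneg (sub_nonneg.2 hx), abs_of_nonneg (sub_nonneg.2 hy),
    abs_of_nonneg (sub_nonneg.2 (hs.trans hx)), abs_of_nonneg (sub_nonneg.2 (hs.trans hy))]
  rw [show y - s₂ + (s₂ - s₁) = y - s₁ by ring, show x - s₂ + (s₂ - s₁) = x - s₁ by ring] at h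
  linarith

theorem fbmProfile_right_sub_left (hp : 0 < p) (hs : s₁ ≤ s₂) :
    fbmProfile p s₁ s₂ s₂ - fbmProfile p s₁ s₂ s₁ = (s₂ - s₁) ^ p := by
  simp only [fbmProfile, sub_self, abs_zero, Real.zero_rpow hp.ne',
    abs_of_nonneg (sub_nonneg.2 hs), abs_sub_comm s₁ s₂]
  ring

theorem fbmProfile_le_fbmProfile (hp : 0 ≤ p) {a b : ℝ} (ha : a ≤ s₁) (hs : s₁ ≤ s₂)
    (hb : s₂ ≤ b) : fbmProfile p s₁ s₂ a ≤ fbmProfile p s₁ s₂ b := by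
  simp only [fbmProfile, abs_sub_comm a, abs_of_nonneg (sub_nonneg.2 ha),
    abs_of_nonneg (sub_nonneg.2 (ha.trans hs)), abs_of_nonneg (sub_nonneg.2 hb),
    abs_of_nonneg (sub_nonneg.2 (hs.trans hb))]
  have h₁ : (b - s₂) ^ p ≤ (b - s₁) ^ p := by gcongr
  have h₂ : (s₁ - a) ^ p ≤ (s₂ - a) ^ p := by gcongr
  linarith

theorem sum_abs_fbmProfile_sub_le (hp₀ : 0 < p) (hp₁ : p ≤ 1) {a b : ℝ} (ha : a ≤ s₁)
    (hs : s₁ ≤ s₂) (hb : s₂ ≤ b) {n : ℕ} {t : Fin (n + 1) → ℝ} (ht : Monotone t)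
    (ht₀ : t 0 = a) (htn : t (Fin.last n) = b) :
    ∑ j : Fin n, |fbmProfile p s₁ s₂ (t j.succ) - fbmProfile p s₁ s₂ (t j.castSucc)|
      ≤ 2 * (s₂ - s₁) ^ p := by
  have h := sum_abs_sub_le_of_antitoneOn_monotoneOn_antitoneOn ha hs hb
    (fbmProfile_antitoneOn_Iic hp₀.le hp₁ hs) (fbmProfile_monotoneOn_Icc hp₀.le)
    (fbmProfile_antitoneOn_Ici hp₀.le hp₁ hs) ht ht₀ htn
  linarith [fbmProfile_right_sub_left hp₀ hs, fbmProfile_le_fbmProfile hp₀.le ha hs hb]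

end fbmProfile

theorem sum_abs_fbmCov_rect_rpow_le {H : ℝ} (hH₀ : 0 < H) (hH : H ≤ 1 / 2) {a b s₁ s₂ : ℝ}
    (ha : a ≤ s₁) (hs : s₁ ≤ s₂) (hb : s₂ ≤ b) {n : ℕ} {t : Fin (n + 1) → ℝ} (ht : Monotone t)
    (ht₀ : t 0 = a) (htn : t (Fin.last n) = b) :
    ∑ j : Fin n, |fbmCov H s₂ (t j.succ) - fbmCov H s₂ (t j.castSucc)
        - fbmCov H s₁ (t j.succ) + fbmCov H s₁ (t j.castSucc)| ^ (1 / (2 * H))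
      ≤ 2 ^ (1 / (2 * H)) * (s₂ - s₁) := by
  have hp : 0 < 2 * H := by linarith
  simp only [fbmCov_rect_eq_fbmProfile_sub]
  calc _ ≤ (∑ j : Fin n, |fbmProfile (2 * H) s₁ s₂ (t j.succ)
          - fbmProfile (2 * H) s₁ s₂ (t j.castSucc)|) ^ (1 / (2 * H)) :=
        Finset.univ.sum_rpow_le_rpow_sum (by rw [le_div_iff₀ hp]; linarith)
          fun j _ => abs_nonneg _
    _ ≤ (2 * (s₂ - s₁) ^ (2 * H)) ^ (1 / (2 * H)) := by
        gcongr
        exact sum_abs_fbmProfile_sub_le hp (by linarith) ha hs hb ht ht₀ htn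
    _ = 2 ^ (1 / (2 * H)) * (s₂ - s₁) := by
        rw [Real.mul_rpow zero_le_two (by positivity), ← Real.rpow_mul (sub_nonneg.2 hs),
          mul_one_div_cancel hp.ne', Real.rpow_one]

/-- For `H ∈ (0, 1/2]` there is a finite constant `C = C(H)` such that for all
`0 ≤ a < b ≤ 1` and all partitions `a = s₀ < ⋯ < s_m = b`, `a = t₀ < ⋯ < t_n = b`,
`∑ᵢ∑ⱼ |R(s_{i+1},t_{j+1}) − R(s_{i+1},t_j) − R(s_i,t_{j+1}) + R(s_i,t_j)|^{1/(2H)}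
  ≤ C (b − a)`. -/
theorem fbmCov_2d_variation_control (H : ℝ) (hH0 : 0 < H) (hH : H ≤ 1 / 2) :
    ∃ C : ℝ, ∀ (a b : ℝ), 0 ≤ a → a < b → b ≤ 1 →
      ∀ (m n : ℕ) (s : Fin (m + 1) → ℝ) (t : Fin (n + 1) → ℝ),
        StrictMono s → s 0 = a → s (Fin.last m) = b →
        StrictMono t → t 0 = a → t (Fin.last n) = b →
        ∑ i : Fin m, ∑ j : Fin n,
            |fbmCov H (s i.succ) (t j.succ) - fbmCov H (s i.succ) (t j.castSucc)
              - fbmCov H (s i.castSucc) (t j.succ)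
              + fbmCov H (s i.castSucc) (t j.castSucc)| ^ (1 / (2 * H))
          ≤ C * (b - a) := by
  refine ⟨2 ^ (1 / (2 * H)), fun a b _ _ _ m n s t hs hs₀ hsm ht ht₀ htn => ?_⟩
  calc _ ≤ ∑ i : Fin m, 2 ^ (1 / (2 * H)) * (s i.succ - s i.castSucc) :=
        Finset.sum_le_sum fun i _ => sum_abs_fbmCov_rect_rpow_le hH0 hH
          (hs₀ ▸ hs.monotone (Fin.zero_le _)) (hs.monotone i.castSucc_le_succ)
          (hsm ▸ hs.monotone (Fin.le_last _)) ht.monotone ht₀ htn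
    _ = 2 ^ (1 / (2 * H)) * (b - a) := by
        rw [← Finset.mul_sum, Fin.sum_succ_sub_castSucc, hsm, hs₀]
end

section
/- (Proposition 2.1, regular regime.) Let H ∈ [1/2,1). Then every rectangular increment of the fractional Brownian covariance is nonnegative: for all 0 ≤ s ≤ t and 0 ≤ u ≤ v one has R(t,v) − R(t,u) − R(s,v) + R(s,u) ≥ 0. Consequently, for all partitions 0 = s_0 < ⋯ < s_m = 1 and 0 = t_0 < ⋯ < t_n = 1 of [0,1], Σ_{i=0}^{m−1} Σ_{j=0}^{n−1} |R(s_{i+1},t_{j+1}) − R(s_{i+1},t_j) − R(s_i,t_{j+1}) + R(s_i,t_j)| = R(1,1) = 1; in particular the two-dimensional 1-variation of R on [0,1]² is finite (and equal to 1). -/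
/-!
Expanding `fbmCov`, the rectangular increment over `[s, t] × [u, v]` is half of
`|u - t| ^ 2H + |v - s| ^ 2H - |v - t| ^ 2H - |u - s| ^ 2H`. The lags satisfy
`u - t ≤ u - s, v - t ≤ v - s` and `(u - s) + (v - t) = (u - t) + (v - s)`, so convexity of
`x ↦ |x| ^ 2H` for `2H ≥ 1` makes the increment nonnegative. The absolute values in the variation
sum can therefore be dropped, and the double sum telescopes to
`R(1,1) - R(1,0) - R(0,1) + R(0,0) = 1`.
-/

open scoped BigOperators

open Set

theorem Fin.sum_succ_sub_castSucc_s7 {G : Type*} [AddCommGroup G] {n : ℕ} (f : Fin (n + 1) → G) :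
    ∑ i : Fin n, (f i.succ - f i.castSucc) = f (Fin.last n) - f 0 := by
  have h := (Fin.sum_univ_succ f).symm.trans (Fin.sum_univ_castSucc f)
  rw [Finset.sum_sub_distrib, sub_eq_sub_iff_add_eq_add, add_comm, h, add_comm]

theorem ConvexOn.map_add_le_of_add_eq_add {s : Set ℝ} {f : ℝ → ℝ} (hf : ConvexOn ℝ s f)
    {a b c d : ℝ} (ha : a ∈ s) (hd : d ∈ s) (hab : a ≤ b) (hbd : b ≤ d)
    (h : b + c = a + d) : f b + f c ≤ f a + f d := by
  rcases (hab.trans hbd).eq_or_lt with rfl | had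
  · obtain rfl : b = a := le_antisymm hbd hab
    obtain rfl : c = b := by linarith
    rfl
  set θ := (b - a) / (d - a)
  have hda : 0 < d - a := sub_pos.2 had
  have hθ₀ : 0 ≤ θ := div_nonneg (sub_nonneg.2 hab) hda.le
  have hθ₁ : θ ≤ 1 := (div_le_one hda).2 (by linarith)
  have hb : (1 - θ) • a + θ • d = b := by
    simp only [θ, smul_eq_mul]; field_simp; ring
  have hc : θ • a + (1 - θ) • d = c := by
    rw [show c = a + d - b by linarith, ← hb]; simp only [smul_eq_mul]; ring
  have h₁ := hf.2 ha hd (sub_nonneg.2 hθ₁) hθ₀ (sub_add_cancel 1 θ)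
  have h₂ := hf.2 ha hd hθ₀ (sub_nonneg.2 hθ₁) (add_sub_cancel θ 1)
  rw [hb] at h₁
  rw [hc] at h₂
  simp only [smul_eq_mul] at h₁ h₂
  linarith

theorem convexOn_abs_rpow {p : ℝ} (hp : 1 ≤ p) : ConvexOn ℝ univ fun x : ℝ => |x| ^ p := by
  have himage : (fun x : ℝ => |x|) '' univ = Ici 0 := by
    rw [image_univ]; exact range_norm (E := ℝ)
  refine ConvexOn.comp (g := fun y : ℝ => y ^ p) ?_ (convexOn_univ_norm (E := ℝ)) ?_
  · rw [himage]; exact convexOn_rpow hp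
  · rw [himage]
    exact fun x hx y _ hxy => Real.rpow_le_rpow hx hxy (zero_le_one.trans hp)

def rectIncr {α β G : Type*} [AddCommGroup G] (R : α → β → G) (s t : α) (u v : β) : G :=
  R t v - R t u - R s v + R s u

theorem sum_sum_rectIncr {α β G : Type*} [AddCommGroup G] (R : α → β → G) {m n : ℕ}
    (s : Fin (m + 1) → α) (t : Fin (n + 1) → β) :
    ∑ i : Fin m, ∑ j : Fin n, rectIncr R (s i.castSucc) (s i.succ) (t j.castSucc) (t j.succ)
      = rectIncr R (s 0) (s (Fin.last m)) (t 0) (t (Fin.last n)) := by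
  have hrow (i : Fin m) :
      ∑ j : Fin n, rectIncr R (s i.castSucc) (s i.succ) (t j.castSucc) (t j.succ)
        = (R (s i.succ) (t (Fin.last n)) - R (s i.castSucc) (t (Fin.last n)))
          - (R (s i.succ) (t 0) - R (s i.castSucc) (t 0)) :=
    (Finset.sum_congr rfl fun j _ => by simp only [rectIncr]; abel).trans
      (Fin.sum_succ_sub_castSucc_s7 fun j => R (s i.succ) (t j) - R (s i.castSucc) (t j))
  rw [Finset.sum_congr rfl fun i _ => hrow i]
  refine (Finset.sum_congr rfl fun i _ => by abel).trans
    ((Fin.sum_succ_sub_castSucc_s7 fun i => R (s i) (t (Fin.last n)) - R (s i) (t 0)).trans ?_)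
  simp only [rectIncr]
  abel

theorem sum_sum_abs_rectIncr_of_nonneg {α β : Type*} [Preorder α] [Preorder β] {R : α → β → ℝ}
    (hR : ∀ ⦃s t : α⦄ ⦃u v : β⦄, s ≤ t → u ≤ v → 0 ≤ rectIncr R s t u v) {m n : ℕ}
    {s : Fin (m + 1) → α} {t : Fin (n + 1) → β} (hs : Monotone s) (ht : Monotone t) :
    ∑ i : Fin m, ∑ j : Fin n, |rectIncr R (s i.castSucc) (s i.succ) (t j.castSucc) (t j.succ)|
      = rectIncr R (s 0) (s (Fin.last m)) (t 0) (t (Fin.last n)) := by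
  rw [← sum_sum_rectIncr]
  refine Finset.sum_congr rfl fun i _ => Finset.sum_congr rfl fun j _ => abs_of_nonneg ?_
  exact hR (hs (Fin.castSucc_le_succ i)) (ht (Fin.castSucc_le_succ j))

theorem fbmCov_rectIncr (H s t u v : ℝ) :
    rectIncr (fbmCov H) s t u v
      = (|u - t| ^ (2 * H) + |v - s| ^ (2 * H) - |v - t| ^ (2 * H) - |u - s| ^ (2 * H)) / 2 := by
  simp only [rectIncr, fbmCov]
  ring

theorem fbmCov_rectIncr_nonneg {H : ℝ} (hH : 1 / 2 ≤ H) {s t u v : ℝ} (hst : s ≤ t)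
    (huv : u ≤ v) : 0 ≤ rectIncr (fbmCov H) s t u v := by
  have hconv := convexOn_abs_rpow (p := 2 * H) (by linarith)
  have := hconv.map_add_le_of_add_eq_add (mem_univ (u - t)) (mem_univ (v - s))
    (b := u - s) (c := v - t) (by linarith) (by linarith) (by ring)
  rw [fbmCov_rectIncr]
  linarith

theorem fbmCov_zero_left {H : ℝ} (hH : H ≠ 0) {x : ℝ} (hx : 0 ≤ x) : fbmCov H 0 x = 0 := by
  simp [fbmCov, Real.zero_rpow (mul_ne_zero two_ne_zero hH), abs_of_nonneg hx]

theorem fbmCov_zero_right {H : ℝ} (hH : H ≠ 0) {x : ℝ} (hx : 0 ≤ x) : fbmCov H x 0 = 0 := by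
  simp [fbmCov, Real.zero_rpow (mul_ne_zero two_ne_zero hH), abs_of_nonneg hx]

theorem fbmCov_one_one {H : ℝ} (hH : H ≠ 0) : fbmCov H 1 1 = 1 := by
  simp [fbmCov, Real.zero_rpow (mul_ne_zero two_ne_zero hH)]

theorem fbmCov_2d_one_variation_general (H : ℝ) (hH0 : 1 / 2 ≤ H) :
    (∀ s t u v : ℝ, 0 ≤ s → s ≤ t → 0 ≤ u → u ≤ v →
      0 ≤ fbmCov H t v - fbmCov H t u - fbmCov H s v + fbmCov H s u) ∧
    fbmCov H 1 1 = 1 ∧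
    ∀ (m n : ℕ) (s : Fin (m + 1) → ℝ) (t : Fin (n + 1) → ℝ),
      StrictMono s → s 0 = 0 → s (Fin.last m) = 1 →
      StrictMono t → t 0 = 0 → t (Fin.last n) = 1 →
      ∑ i : Fin m, ∑ j : Fin n,
          |fbmCov H (s i.succ) (t j.succ) - fbmCov H (s i.succ) (t j.castSucc)
            - fbmCov H (s i.castSucc) (t j.succ)
            + fbmCov H (s i.castSucc) (t j.castSucc)|
        = 1 := by
  have hH : H ≠ 0 := (one_half_pos.trans_le hH0).ne'
  refine ⟨fun s t u v _ hst _ huv => fbmCov_rectIncr_nonneg hH0 hst huv, fbmCov_one_one hH, ?_⟩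
  intro m n s t hs hs0 hs1 ht ht0 ht1
  have hsum := sum_sum_abs_rectIncr_of_nonneg (fun _ _ _ _ => fbmCov_rectIncr_nonneg hH0)
    hs.monotone ht.monotone
  rw [hs0, hs1, ht0, ht1] at hsum
  simpa [rectIncr, fbmCov_one_one hH, fbmCov_zero_left hH, fbmCov_zero_right hH] using hsum

/-- (Proposition 2.1, regular regime.) For `H ∈ [1/2,1)`: every rectangular increment
of the fBm covariance is nonnegative; `R(1,1) = 1`; and for all pairs of partitions
`0 = s₀ < ⋯ < s_m = 1`, `0 = t₀ < ⋯ < t_n = 1`,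
`∑ᵢ∑ⱼ |R(s_{i+1},t_{j+1}) − R(s_{i+1},t_j) − R(s_i,t_{j+1}) + R(s_i,t_j)| = R(1,1) = 1`;
in particular the 2D 1-variation of `R` on `[0,1]²` is finite and equals `1`. -/
theorem fbmCov_2d_one_variation (H : ℝ) (hH0 : 1 / 2 ≤ H) (hH1 : H < 1) :
    (∀ s t u v : ℝ, 0 ≤ s → s ≤ t → 0 ≤ u → u ≤ v →
      0 ≤ fbmCov H t v - fbmCov H t u - fbmCov H s v + fbmCov H s u) ∧
    fbmCov H 1 1 = 1 ∧
    ∀ (m n : ℕ) (s : Fin (m + 1) → ℝ) (t : Fin (n + 1) → ℝ),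
      StrictMono s → s 0 = 0 → s (Fin.last m) = 1 →
      StrictMono t → t 0 = 0 → t (Fin.last n) = 1 →
      ∑ i : Fin m, ∑ j : Fin n,
          |fbmCov H (s i.succ) (t j.succ) - fbmCov H (s i.succ) (t j.castSucc)
            - fbmCov H (s i.castSucc) (t j.succ)
            + fbmCov H (s i.castSucc) (t j.castSucc)|
        = 1 :=
  fbmCov_2d_one_variation_general H hH0
end

section
/- (Chen's relation / multiplicativity of the signature of a smooth path.) Let d ≥ 1 and let x : [0,1] → ℝ^d be continuously differentiable. Define iterated integrals by x^0_{s,t} = 1 ∈ ℝ and recursively, for m ≥ 1, x^m_{s,t} = ∫_s^t x^{m−1}_{s,r} ⊗ x'(r) dr ∈ (ℝ^d)^{⊗ m}. Then for all 0 ≤ s ≤ u ≤ t ≤ 1 and every m ≥ 0, x^m_{s,t} = Σ_{k=0}^{m} x^k_{s,u} ⊗ x^{m−k}_{u,t}. Equivalently, the truncated signature S_N(x)_{s,t} = 1 + Σ_{m=1}^N x^m_{s,t} ∈ T^N(ℝ^d) is a multiplicative functional: S_N(x)_{s,t} = S_N(x)_{s,u} ⊗ S_N(x)_{u,t}. -/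
open scoped BigOperators

/-- Iterated integrals of a path `x : ℝ → ℝ^d`, written in coordinates: for a word
`I : Fin m → Fin d`, `iterInt d x m I s t` is the coefficient of
`e_{I 0} ⊗ ⋯ ⊗ e_{I (m-1)}` in the level-`m` iterated integral `x^m_{s,t}`, defined
recursively by `x^0_{s,t} = 1` and `x^{m+1}_{s,t} = ∫_s^t x^m_{s,r} ⊗ x'(r) dr`. -/
noncomputable def iterInt (d : ℕ) (x : ℝ → Fin d → ℝ) :
    (m : ℕ) → (Fin m → Fin d) → ℝ → ℝ → ℝ
  | 0, _, _, _ => 1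
  | m + 1, I, s, t =>
      ∫ r in s..t,
        iterInt d x m (fun i => I i.castSucc) s r * deriv (fun u => x u (I (Fin.last m))) r

/-!
Induction on the level `m`. Splitting the defining integral of `x^{m+1}_{s,t}` at `u`, the
piece over `[s,u]` is `x^{m+1}_{s,u}`, the term `k = m + 1` of the sum. On `[u,t]` the induction
hypothesis expands `x^m_{s,r} = ∑_k x^k_{s,u} ⊗ x^{m-k}_{u,r}`, and integrating against `dx_r`
turns each `x^{m-k}_{u,r}` into `x^{m+1-k}_{u,t}`. The analytic input is the interval
integrability of the coordinate derivatives, which for a `C¹` path holds because `deriv` agrees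
with the continuous one-sided derivative away from the endpoints of `[0,1]`.
-/

open MeasureTheory Set intervalIntegral

theorem ContDiffOn.intervalIntegrable_deriv {E : Type*} [NormedAddCommGroup E]
    [NormedSpace ℝ E] {f : ℝ → E} {a b c e : ℝ} (hf : ContDiffOn ℝ 1 f (Icc a b))
    (hc : c ∈ Icc a b) (he : e ∈ Icc a b) : IntervalIntegrable (deriv f) volume c e := by
  wlog hce : c ≤ e generalizing c e
  · exact (this he hc (le_of_not_ge hce)).symm
  rcases hce.eq_or_lt with rfl | hce
  · exact IntervalIntegrable.refl
  have hab : a < b := (hc.1.trans_lt hce).trans_le he.2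
  have hcont : ContinuousOn (derivWithin f (Icc a b)) (Icc c e) :=
    (hf.continuousOn_derivWithin (uniqueDiffOn_Icc hab) le_rfl).mono (Icc_subset_Icc hc.1 he.2)
  rw [intervalIntegrable_iff_integrableOn_Ioo_of_le hce.le]
  refine (hcont.integrableOn_Icc.mono_set Ioo_subset_Icc_self).congr_fun
    (fun r hr => ?_) measurableSet_Ioo
  exact derivWithin_of_mem_nhds (Icc_mem_nhds (hc.1.trans_lt hr.1) (hr.2.trans_le he.2))

variable {d : ℕ} {x : ℝ → Fin d → ℝ}

theorem iterInt_congr {m m' : ℕ} (h : m = m') {I : Fin m → Fin d} {I' : Fin m' → Fin d}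
    (hI : ∀ i, I i = I' (Fin.cast h i)) (s t : ℝ) :
    iterInt d x m I s t = iterInt d x m' I' s t := by
  subst h
  congr
  exact funext hI

theorem iterInt_of_length_eq_zero {m : ℕ} (hm : m = 0) (I : Fin m → Fin d) (s t : ℝ) :
    iterInt d x m I s t = 1 := by
  subst hm
  rfl

theorem continuousOn_iterInt {a b : ℝ}
    (hx : ∀ i, IntervalIntegrable (deriv fun v => x v i) volume a b) (m : ℕ)
    (I : Fin m → Fin d) :
    ContinuousOn (iterInt d x m I a) (uIcc a b) := by
  induction m with
  | zero => exact continuousOn_const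
  | succ m ih =>
    exact continuousOn_primitive_interval' ((hx _).continuousOn_mul (ih _)) left_mem_uIcc

theorem intervalIntegrable_iterInt_mul_deriv {a b : ℝ}
    (hx : ∀ i, IntervalIntegrable (deriv fun v => x v i) volume a b) (m : ℕ)
    (I : Fin m → Fin d) (i : Fin d) :
    IntervalIntegrable (fun r => iterInt d x m I a r * deriv (fun v => x v i) r) volume a b :=
  (hx i).continuousOn_mul (continuousOn_iterInt hx m I)

theorem iterInt_succ_sub_eq_integral {m k : ℕ} (hk : k ≤ m) (I : Fin (m + 1) → Fin d)
    (u t : ℝ) :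
    iterInt d x (m + 1 - k)
        (fun i => I (Fin.cast (Nat.add_sub_cancel' (hk.trans m.le_succ)) (Fin.natAdd k i))) u t =
      ∫ r in u..t,
        iterInt d x (m - k)
            (fun i => I (Fin.cast (Nat.add_sub_cancel' hk) (Fin.natAdd k i)).castSucc) u r *
          deriv (fun v => x v (I (Fin.last m))) r := by
  have hlen : m - k + 1 = m + 1 - k := by omega
  rw [← iterInt_congr hlen (fun _ => rfl)]
  have hlast : Fin.cast (Nat.add_sub_cancel' (hk.trans m.le_succ))
      (Fin.natAdd k (Fin.cast hlen (Fin.last (m - k)))) = Fin.last m :=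
    Fin.ext (by simp only [Fin.val_cast, Fin.val_natAdd, Fin.val_last]; omega)
  simp only [iterInt, hlast]
  rfl

theorem iterInt_eq_sum_mul {s u t : ℝ}
    (hx : ∀ i, IntervalIntegrable (deriv fun v => x v i) volume s t)
    (hsu : s ≤ u) (hut : u ≤ t) (m : ℕ) (I : Fin m → Fin d) :
    iterInt d x m I s t =
      ∑ k : Fin (m + 1),
        iterInt d x (k : ℕ) (fun i => I (Fin.castLE (Nat.lt_succ_iff.mp k.isLt) i)) s u *
          iterInt d x (m - (k : ℕ))
            (fun i => I (Fin.cast (Nat.add_sub_cancel' (Nat.lt_succ_iff.mp k.isLt))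
              (Fin.natAdd (k : ℕ) i))) u t := by
  induction m generalizing t with
  | zero => simp [iterInt]
  | succ m ih =>
    have hu : u ∈ uIcc s t := mem_uIcc_of_le hsu hut
    set J : Fin m → Fin d := fun i => I i.castSucc
    set g := deriv fun v => x v (I (Fin.last m))
    have hx_ut i := (hx i).mono_set (uIcc_subset_uIcc hu right_mem_uIcc)
    have hint : IntervalIntegrable (fun r => iterInt d x m J s r * g r) volume s t :=
      intervalIntegrable_iterInt_mul_deriv hx m J _
    have hsum : ∀ r ∈ uIcc u t, iterInt d x m J s r * g r =
        ∑ k : Fin (m + 1),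
          iterInt d x (k : ℕ) (fun i => J (Fin.castLE (Nat.lt_succ_iff.mp k.isLt) i)) s u *
            (iterInt d x (m - (k : ℕ))
              (fun i => J (Fin.cast (Nat.add_sub_cancel' (Nat.lt_succ_iff.mp k.isLt))
                (Fin.natAdd (k : ℕ) i))) u r * g r) := by
      intro r hr
      rw [uIcc_of_le hut] at hr
      have hr' : r ∈ uIcc s t := mem_uIcc_of_le (hsu.trans hr.1) hr.2
      rw [ih (fun i => (hx i).mono_set (uIcc_subset_uIcc_left hr')) hr.1, Finset.sum_mul]
      simp only [mul_assoc]
    change (∫ r in s..t, iterInt d x m J s r * g r) = _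
    rw [Fin.sum_univ_castSucc, ← integral_add_adjacent_intervals
      (hint.mono_set (uIcc_subset_uIcc_left hu))
      (hint.mono_set (uIcc_subset_uIcc hu right_mem_uIcc)), integral_congr hsum,
      intervalIntegral.integral_finsetSum, add_comm]
    · congr 1
      · refine Finset.sum_congr rfl fun k _ => ?_
        rw [intervalIntegral.integral_const_mul]
        exact congrArg _ (iterInt_succ_sub_eq_integral k.is_le I u t).symm
      · rw [iterInt_of_length_eq_zero (m := m + 1 - (Fin.last (m + 1) : ℕ)) (by simp),
          mul_one]
        rfl
    · intro k _
      exact (intervalIntegrable_iterInt_mul_deriv hx_ut _ _ _).const_mul _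

theorem chen_relation_general (d : ℕ) (x : ℝ → Fin d → ℝ)
    (hx : ContDiffOn ℝ 1 x (Set.Icc 0 1))
    (s u t : ℝ) (h0s : 0 ≤ s) (hsu : s ≤ u) (hut : u ≤ t) (ht1 : t ≤ 1)
    (m : ℕ) (I : Fin m → Fin d) :
    iterInt d x m I s t =
      ∑ k : Fin (m + 1),
        iterInt d x (k : ℕ) (fun i => I (Fin.castLE (Nat.lt_succ_iff.mp k.isLt) i)) s u *
          iterInt d x (m - (k : ℕ))
            (fun i => I (Fin.cast (Nat.add_sub_cancel' (Nat.lt_succ_iff.mp k.isLt))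
              (Fin.natAdd (k : ℕ) i))) u t := by
  have hx' i : IntervalIntegrable (deriv fun v => x v i) volume s t :=
    ((contDiff_apply ℝ ℝ i).comp_contDiffOn hx).intervalIntegrable_deriv
      ⟨h0s, hsu.trans (hut.trans ht1)⟩ ⟨h0s.trans (hsu.trans hut), ht1⟩
  exact iterInt_eq_sum_mul hx' hsu hut m I

/-- Chen's relation (multiplicativity of the signature of a smooth path): for a `C¹`
path `x : [0,1] → ℝ^d`, all `0 ≤ s ≤ u ≤ t ≤ 1`, every level `m` and every word
`I : Fin m → Fin d`, the coordinate of `x^m_{s,t}` along `I` equals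
`∑_{k=0}^m (x^k_{s,u} ⊗ x^{m-k}_{u,t})` in the corresponding coordinates; i.e. the
truncated signature is a multiplicative functional. -/
theorem chen_relation (d : ℕ) (hd : 1 ≤ d) (x : ℝ → Fin d → ℝ)
    (hx : ContDiffOn ℝ 1 x (Set.Icc 0 1))
    (s u t : ℝ) (h0s : 0 ≤ s) (hsu : s ≤ u) (hut : u ≤ t) (ht1 : t ≤ 1)
    (m : ℕ) (I : Fin m → Fin d) :
    iterInt d x m I s t =
      ∑ k : Fin (m + 1),
        iterInt d x (k : ℕ) (fun i => I (Fin.castLE (Nat.lt_succ_iff.mp k.isLt) i)) s u *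
          iterInt d x (m - (k : ℕ))
            (fun i => I (Fin.cast (Nat.add_sub_cancel' (Nat.lt_succ_iff.mp k.isLt))
              (Fin.natAdd (k : ℕ) i))) u t :=
  chen_relation_general d x hx s u t h0s hsu hut ht1 m I
end
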